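/- Let g₀(z₁,z₂;τ) = Σ_{m∈ℤ} e(τm²/2 + m(z₁+z₂))/(1 − e(mτ + z₂)) and let g(z₁,z₂;τ) be the cone sum Σ_{(n+α(z₁))(m+α(z₂))>0} sign(m+α(z₂))·e((n+m/2)mτ + mz₁ + (m+n)z₂). Then for α(z₁) ≥ 0 with α(z₁), α(z₂) ∉ ℤ, the difference g₀ − g is a finite theta correction: g₀(z₁,z₂;τ) − g(z₁,z₂;τ) = −(Σ_{0<n≤α(z₁)} e(−n²τ/2 + n z₁))·θ(z₁+z₂; τ). -/

import Mathlib

open Complex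

noncomputable def e (w : ℂ) : ℂ := Complex.exp (2 * Real.pi * Complex.I * w)

noncomputable def theta (z τ : ℂ) : ℂ := ∑' n : ℤ, e (τ * n ^ 2 / 2 + n * z)

noncomputable def thetaD (z τ : ℂ) : ℂ := deriv (fun w => theta w τ) z

noncomputable def al (τ z : ℂ) : ℝ := z.im / τ.im

noncomputable def sgn (t : ℝ) : ℂ := if 0 < t then 1 else -1

/-- term of the Kronecker-Eisenstein series, indexed by `(m, n) : ℤ × ℤ`. -/
noncomputable def fterm (τ z₁ z₂ : ℂ) (p : ℤ × ℤ) : ℂ :=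
  if 0 < (al τ z₁ + p.1) * (al τ z₂ + p.2) then
    sgn (al τ z₁ + p.1) * e (τ * p.1 * p.2 + p.2 * z₁ + p.1 * z₂)
  else 0

noncomputable def fKr (z₁ z₂ τ : ℂ) : ℂ := ∑' p : ℤ × ℤ, fterm τ z₁ z₂ p

noncomputable def kappa (y x τ : ℂ) : ℂ :=
  ∑' n : ℤ, e (τ * n ^ 2 / 2 + n * x) / (e (n * τ) - e y)

/-- term of the trapezoid series `g`, indexed by `(m, n) : ℤ × ℤ`. -/
noncomputable def gterm (τ z₁ z₂ : ℂ) (p : ℤ × ℤ) : ℂ :=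
  if 0 < ((p.2 : ℝ) + al τ z₁) * ((p.1 : ℝ) + al τ z₂) then
    sgn ((p.1 : ℝ) + al τ z₂) *
      e (((p.2 : ℂ) + p.1 / 2) * p.1 * τ + p.1 * z₁ + ((p.1 : ℂ) + p.2) * z₂)
  else 0

noncomputable def gF (z₁ z₂ τ : ℂ) : ℂ := ∑' p : ℤ × ℤ, gterm τ z₁ z₂ p

noncomputable def g0 (z₁ z₂ τ : ℂ) : ℂ :=
  ∑' m : ℤ, e (τ * m ^ 2 / 2 + m * (z₁ + z₂)) / (1 - e (m * τ + z₂))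

/-- term of the series `h₀`, indexed by `(m, n) : ℤ × ℤ`. -/
noncomputable def hterm (τ x : ℂ) (p : ℤ × ℤ) : ℂ :=
  if 0 < ((p.1 : ℝ) + 1 / 2) * ((p.2 : ℝ) + 1 / 2) then
    sgn ((p.1 : ℝ) + 1 / 2) *
      e (τ / 2 * (2 * p.1 ^ 2 + 4 * p.1 * p.2 + p.2 ^ 2) + p.2 * x)
  else 0

noncomputable def h0 (τ x : ℂ) : ℂ := ∑' p : ℤ × ℤ, hterm τ x p

def notInt (t : ℝ) : Prop := ∀ k : ℤ, t ≠ (k : ℝ)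


lemma e_add (a b : ℂ) : e (a + b) = e a * e b := by
  simp [e, mul_add, Complex.exp_add]

lemma e_ne_zero (a : ℂ) : e a ≠ 0 := Complex.exp_ne_zero _

lemma e_zpow (a : ℂ) (n : ℤ) : e ((n : ℂ) * a) = (e a) ^ n := by
  rw [e, e, ← Complex.exp_int_mul]
  ring_nf

lemma norm_e (w : ℂ) : ‖e w‖ = Real.exp (-(2 * Real.pi * w.im)) := by
  rw [e, Complex.norm_exp]
  congr 1
  simp [Complex.mul_re, Complex.mul_im]

section
variable {τ z₁ z₂ : ℂ} (hτ : 0 < τ.im)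

noncomputable def TT (τ z₁ z₂ : ℂ) (m n : ℤ) : ℂ :=
  e (((n : ℂ) + m / 2) * m * τ + m * z₁ + ((m : ℂ) + n) * z₂)

noncomputable def qq (τ z₂ : ℂ) (m : ℤ) : ℂ := e ((m : ℂ) * τ + z₂)

include hτ

lemma T_im (m n : ℤ) : (((n : ℂ) + m / 2) * m * τ + m * z₁ + ((m : ℂ) + n) * z₂).im
    = (((n : ℝ) + m / 2) * m + m * al τ z₁ + ((m : ℝ) + n) * al τ z₂) * τ.im := by
  have e1 : (((n : ℂ) + m / 2) * m * τ + m * z₁ + ((m : ℂ) + n) * z₂)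
      = ((((n : ℝ) + m / 2) * m : ℝ) : ℂ) * τ + (((m : ℝ) : ℝ) : ℂ) * z₁
        + ((((m : ℝ) + n) : ℝ) : ℂ) * z₂ := by push_cast; ring
  rw [e1]
  simp only [Complex.add_im, Complex.im_ofReal_mul, al]
  field_simp

lemma norm_T (m n : ℤ) : ‖TT τ z₁ z₂ m n‖ =
    Real.exp (-(2 * Real.pi * ((((n : ℝ) + m / 2) * m + m * al τ z₁
      + ((m : ℝ) + n) * al τ z₂) * τ.im))) := by
  rw [TT, norm_e, T_im hτ]

lemma q_im (m : ℤ) : ((m : ℂ) * τ + z₂).im = ((m : ℝ) + al τ z₂) * τ.im := by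
  have e1 : ((m : ℂ) * τ + z₂).im = (m : ℝ) * τ.im + z₂.im := by
    simp [Complex.add_im, Complex.mul_im]
  rw [e1, al]
  field_simp

lemma norm_q (m : ℤ) : ‖qq τ z₂ m‖ = Real.exp (-(2 * Real.pi * (((m : ℝ) + al τ z₂) * τ.im))) := by
  rw [qq, norm_e, q_im hτ]

omit hτ in
lemma T_succ (m n : ℤ) : TT τ z₁ z₂ m (n + 1) = TT τ z₁ z₂ m n * qq τ z₂ m := by
  rw [TT, TT, qq, ← e_add]
  congr 1
  push_cast
  ring

omit hτ in
lemma T_zpow (m n : ℤ) : TT τ z₁ z₂ m n = TT τ z₁ z₂ m 0 * (qq τ z₂ m) ^ n := by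
  rw [TT, TT, qq, ← e_zpow, ← e_add]
  congr 1
  push_cast
  ring

end

lemma pos_iff_notInt {a : ℝ} (ha : notInt a) (n : ℤ) : 0 < (n : ℝ) + a ↔ -⌊a⌋ ≤ n := by
  constructor
  · intro h
    have h' : ((-n : ℤ) : ℝ) ≤ a := by push_cast; linarith
    have := Int.le_floor.mpr h'
    omega
  · intro h
    have h' : ((-n : ℤ) : ℝ) ≤ a := Int.le_floor.mp (by omega)
    have hne : a ≠ ((-n : ℤ) : ℝ) := ha _
    push_cast at h' hne
    rcases lt_of_le_of_ne h' (Ne.symm hne) with h''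
    linarith

lemma neg_iff_notInt {a : ℝ} (ha : notInt a) (n : ℤ) : (n : ℝ) + a < 0 ↔ n ≤ -⌊a⌋ - 1 := by
  rw [← not_iff_not, not_lt, not_le]
  have h0 : (n : ℝ) + a ≠ 0 := by
    intro h
    exact ha (-n) (by push_cast; linarith)
  constructor
  · intro h
    have h' : 0 < (n : ℝ) + a := lt_of_le_of_ne h (Ne.symm h0)
    have := (pos_iff_notInt ha n).mp h'
    omega
  · intro h
    have := (pos_iff_notInt ha n).mpr (by omega)
    linarith



section
variable {τ z₁ z₂ : ℂ} (hτ : 0 < τ.im) (h₁' : notInt (al τ z₁)) (h₂ : notInt (al τ z₂))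

include hτ h₁' h₂ in
lemma row (m : ℤ) :
    HasSum (fun n : ℤ => gterm τ z₁ z₂ (m, n))
      (TT τ z₁ z₂ m (-⌊al τ z₁⌋) / (1 - qq τ z₂ m)) := by
  set K := ⌊al τ z₁⌋ with hK
  have hqne : qq τ z₂ m ≠ 0 := e_ne_zero _
  have hmne : ((m : ℝ) + al τ z₂) ≠ 0 := by
    intro h; exact h₂ (-m) (by push_cast; linarith)
  rcases lt_or_gt_of_ne hmne with hm | hm
  · -- m + a2 < 0
    have hq1 : 1 < ‖qq τ z₂ m‖ := by
      rw [norm_q hτ, ← Real.exp_zero, Real.exp_lt_exp]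
      have : ((m : ℝ) + al τ z₂) * τ.im < 0 := mul_neg_of_neg_of_pos hm hτ
      nlinarith [Real.pi_pos]
    have hqinv : ‖(qq τ z₂ m)⁻¹‖ < 1 := by
      rw [norm_inv, inv_lt_one_iff₀]; right; exact hq1
    have hgt : ∀ n : ℤ, gterm τ z₁ z₂ (m, n) = if n ≤ -K - 1 then -TT τ z₁ z₂ m n else 0 := by
      intro n
      rw [gterm]
      by_cases h : n ≤ -K - 1
      · have hneg : ((n : ℝ) + al τ z₁) < 0 := (neg_iff_notInt h₁' n).mpr h
        rw [if_pos (mul_pos_of_neg_of_neg hneg hm), if_pos h, sgn,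
          if_neg (by push_neg; linarith), TT]
        ring
      · rw [if_neg, if_neg h]
        have h' : 0 < ((n : ℝ) + al τ z₁) := (pos_iff_notInt h₁' n).mpr (by omega)
        push_neg
        nlinarith
    have hcomp : ∀ i : ℕ, gterm τ z₁ z₂ (m, -K - 1 - i)
        = (-TT τ z₁ z₂ m (-K - 1)) * ((qq τ z₂ m)⁻¹) ^ i := by
      intro i
      rw [hgt, if_pos (by omega), T_zpow, T_zpow (n := -K - 1)]
      rw [show (-K - 1 - (i : ℤ)) = (-K - 1) + (-(i : ℤ)) by ring, zpow_add₀ hqne,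
        zpow_neg, zpow_natCast, inv_pow]
      ring
    have geo : HasSum (fun i : ℕ => (-TT τ z₁ z₂ m (-K - 1)) * ((qq τ z₂ m)⁻¹) ^ i)
        ((-TT τ z₁ z₂ m (-K - 1)) * (1 - (qq τ z₂ m)⁻¹)⁻¹) :=
      (hasSum_geometric_of_norm_lt_one hqinv).mul_left _
    have hinj : Function.Injective (fun i : ℕ => -K - 1 - (i : ℤ)) := by
      intro a b h; simpa using h
    have hvan : ∀ n ∉ Set.range (fun i : ℕ => -K - 1 - (i : ℤ)), gterm τ z₁ z₂ (m, n) = 0 := by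
      intro n hn
      rw [hgt, if_neg]
      intro h
      refine hn ⟨(-K - 1 - n).toNat, ?_⟩
      show -K - 1 - (((-K - 1 - n).toNat : ℤ)) = n
      omega
    have := (hinj.hasSum_iff hvan).mp (by
      convert geo using 1
      funext i
      exact hcomp i)
    convert this using 1
    have hTsucc : TT τ z₁ z₂ m (-K) = TT τ z₁ z₂ m (-K - 1) * qq τ z₂ m := by
      rw [← T_succ]; norm_num
    have h1q : (1 : ℂ) - qq τ z₂ m ≠ 0 := by
      intro h
      have : qq τ z₂ m = 1 := by linear_combination -h
      rw [this] at hq1; simp at hq1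
    have h1qi : (1 : ℂ) - (qq τ z₂ m)⁻¹ ≠ 0 := by
      intro h
      have : (qq τ z₂ m)⁻¹ = 1 := by linear_combination -h
      rw [this] at hqinv; simp at hqinv
    have base : (1 - (qq τ z₂ m)⁻¹) = (1 - qq τ z₂ m) / (-qq τ z₂ m) := by
      rw [eq_div_iff (neg_ne_zero.2 hqne)]
      field_simp
      ring
    have key : (1 - (qq τ z₂ m)⁻¹)⁻¹ = -qq τ z₂ m / (1 - qq τ z₂ m) := by
      rw [base, inv_div]
    rw [key, hTsucc]
    ring
  · -- m + a2 > 0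
    have hq1 : ‖qq τ z₂ m‖ < 1 := by
      rw [norm_q hτ, ← Real.exp_zero, Real.exp_lt_exp]
      have : 0 < ((m : ℝ) + al τ z₂) * τ.im := mul_pos hm hτ
      nlinarith [Real.pi_pos]
    have hgt : ∀ n : ℤ, gterm τ z₁ z₂ (m, n) = if -K ≤ n then TT τ z₁ z₂ m n else 0 := by
      intro n
      rw [gterm]
      by_cases h : -K ≤ n
      · have hpos : 0 < ((n : ℝ) + al τ z₁) := (pos_iff_notInt h₁' n).mpr h
        rw [if_pos (mul_pos hpos hm), if_pos h, sgn, if_pos hm, one_mul, TT]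
      · rw [if_neg, if_neg h]
        have h' : ((n : ℝ) + al τ z₁) < 0 := (neg_iff_notInt h₁' n).mpr (by omega)
        push_neg
        nlinarith
    have hcomp : ∀ i : ℕ, gterm τ z₁ z₂ (m, -K + i)
        = TT τ z₁ z₂ m (-K) * (qq τ z₂ m) ^ i := by
      intro i
      rw [hgt, if_pos (by omega), T_zpow, T_zpow (n := -K)]
      rw [zpow_add₀ hqne, zpow_natCast]
      ring
    have geo : HasSum (fun i : ℕ => TT τ z₁ z₂ m (-K) * (qq τ z₂ m) ^ i)
        (TT τ z₁ z₂ m (-K) * (1 - qq τ z₂ m)⁻¹) :=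
      (hasSum_geometric_of_norm_lt_one hq1).mul_left _
    have hinj : Function.Injective (fun i : ℕ => -K + (i : ℤ)) := by
      intro a b h; simpa using h
    have hvan : ∀ n ∉ Set.range (fun i : ℕ => -K + (i : ℤ)), gterm τ z₁ z₂ (m, n) = 0 := by
      intro n hn
      rw [hgt, if_neg]
      intro h
      refine hn ⟨(n + K).toNat, ?_⟩
      show -K + (((n + K).toNat : ℤ)) = n
      omega
    have := (hinj.hasSum_iff hvan).mp (by
      convert geo using 1
      funext i
      exact hcomp i)
    rw [div_eq_mul_inv]
    exact this

end

lemma summable_r {r : ℝ} (h0 : 0 ≤ r) (h1 : r < 1) : Summable fun m : ℤ => r ^ m.natAbs := by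
  apply Summable.of_nat_of_neg_add_one
  · have := summable_geometric_of_lt_one h0 h1
    apply this.congr
    intro n
    simp
  · have := (summable_geometric_of_lt_one h0 h1).mul_left r
    apply this.congr
    intro n
    have : ((-((n : ℤ) + 1)).natAbs) = n + 1 := by omega
    rw [this, pow_succ]
    ring

lemma floor_dist_pos {a : ℝ} (ha : notInt a) :
    0 < a - ⌊a⌋ ∧ 0 < (⌊a⌋ : ℝ) + 1 - a := by
  constructor
  · rcases lt_of_le_of_ne (Int.floor_le a) (Ne.symm (ha ⌊a⌋)) with h
    linarith
  · linarith [Int.lt_floor_add_one a]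

lemma cone_bound {a1 a2 : ℝ} (ha2 : notInt a2) (m n : ℤ)
    (h : 0 < ((n : ℝ) + a1) * ((m : ℝ) + a2)) :
    min (min (a2 - ⌊a2⌋) ((⌊a2⌋ : ℝ) + 1 - a2)) 1 * (|(m : ℝ)| + |(n : ℝ)|)
      - ((a2 - ⌊a2⌋) * |a1| + ((⌊a2⌋ : ℝ) + 1 - a2) * |a1| + (1 + |a2|) ^ 2 + |a1 * a2|)
      ≤ ((n : ℝ) + (m : ℝ) / 2) * m + m * a1 + ((m : ℝ) + n) * a2 := by
  obtain ⟨hδ1, hδ2⟩ := floor_dist_pos ha2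
  set δ1 := a2 - ⌊a2⌋ with hδ1d
  set δ2 := (⌊a2⌋ : ℝ) + 1 - a2 with hδ2d
  set c := min (min δ1 δ2) 1 with hcd
  have hc0 : 0 < c := lt_min (lt_min hδ1 hδ2) one_pos
  have hc1 : c ≤ 1 := min_le_right _ _
  have hcδ : c ≤ min δ1 δ2 := min_le_left _ _
  clear_value δ1 δ2 c
  have hmne : ((m : ℝ) + a2) ≠ 0 := by
    intro hh; exact ha2 (-m) (by push_cast; linarith)
  have hu : min δ1 δ2 ≤ |(m : ℝ) + a2| := by
    rcases lt_or_gt_of_ne hmne with hm | hm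
    · have hm' : m ≤ -⌊a2⌋ - 1 := (neg_iff_notInt ha2 m).mp hm
      have : (m : ℝ) + a2 ≤ -δ2 := by
        have : (m : ℝ) ≤ (-⌊a2⌋ - 1 : ℤ) := by exact_mod_cast hm'
        push_cast at this
        linarith
      rw [abs_of_neg hm]
      calc min δ1 δ2 ≤ δ2 := min_le_right _ _
        _ ≤ -((m : ℝ) + a2) := by linarith
    · have hm' : -⌊a2⌋ ≤ m := (pos_iff_notInt ha2 m).mp hm
      have : δ1 ≤ (m : ℝ) + a2 := by
        have : ((-⌊a2⌋ : ℤ) : ℝ) ≤ (m : ℝ) := by exact_mod_cast hm'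
        push_cast at this
        linarith
      rw [abs_of_pos hm]
      calc min δ1 δ2 ≤ δ1 := min_le_left _ _
        _ ≤ (m : ℝ) + a2 := this
  have hv : |(n : ℝ)| - |a1| ≤ |(n : ℝ) + a1| := by
    have h1 : |(n : ℝ)| = |((n : ℝ) + a1) + (-a1)| := by ring_nf
    have h2 := abs_add_le ((n : ℝ) + a1) (-a1)
    rw [abs_neg] at h2
    linarith [h1 ▸ h2]
  have huv : ((n : ℝ) + a1) * ((m : ℝ) + a2) = |(n : ℝ) + a1| * |(m : ℝ) + a2| := by
    rw [← abs_mul, abs_of_pos h]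
  have key1 : c * |(n : ℝ)| - (δ1 * |a1| + δ2 * |a1|) ≤ ((n : ℝ) + a1) * ((m : ℝ) + a2) := by
    have h1 : |(n : ℝ) + a1| * (min δ1 δ2) ≤ |(n : ℝ) + a1| * |(m : ℝ) + a2| :=
      mul_le_mul_of_nonneg_left hu (abs_nonneg _)
    have h2 : c * (|(n : ℝ)| - |a1|) ≤ c * |(n : ℝ) + a1| :=
      mul_le_mul_of_nonneg_left hv hc0.le
    have h3 : c * |(n : ℝ) + a1| ≤ min δ1 δ2 * |(n : ℝ) + a1| :=
      mul_le_mul_of_nonneg_right hcδ (abs_nonneg _)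
    have h4 : c * |a1| ≤ δ1 * |a1| :=
      mul_le_mul_of_nonneg_right (hcδ.trans (min_le_left _ _)) (abs_nonneg _)
    have h5 : 0 ≤ δ2 * |a1| := mul_nonneg hδ2.le (abs_nonneg _)
    rw [huv]
    nlinarith
  have key2 : |(m : ℝ)| - (1 + |a2|) ^ 2 ≤ (m : ℝ) ^ 2 / 2 + (m : ℝ) * a2 := by
    nlinarith [sq_nonneg (|(m : ℝ)| - (1 + |a2|)), neg_abs_le ((m : ℝ) * a2),
      abs_mul (m : ℝ) a2, _root_.sq_abs (m : ℝ), abs_nonneg (m : ℝ), abs_nonneg a2]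
  have expand : ((n : ℝ) + (m : ℝ) / 2) * m + m * a1 + ((m : ℝ) + n) * a2
      = ((n : ℝ) + a1) * ((m : ℝ) + a2) + (m : ℝ) ^ 2 / 2 + (m : ℝ) * a2 - a1 * a2 := by
    ring
  rw [expand]
  have h6 : c * |(m : ℝ)| ≤ 1 * |(m : ℝ)| := mul_le_mul_of_nonneg_right hc1 (abs_nonneg _)
  have h7 : c * (|(m : ℝ)| + |(n : ℝ)|) = c * |(m : ℝ)| + c * |(n : ℝ)| := mul_add _ _ _
  nlinarith [key1, key2, h6, h7, le_abs_self (a1 * a2), abs_nonneg (m : ℝ), abs_nonneg (n : ℝ)]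

lemma quad_bound (b : ℝ) (m : ℤ) : |(m : ℝ)| - (1 + |b|) ^ 2 ≤ (m : ℝ) ^ 2 / 2 + m * b := by
  nlinarith [sq_nonneg (|(m : ℝ)| - (1 + |b|)), neg_abs_le ((m : ℝ) * b),
    abs_mul (m : ℝ) b, _root_.sq_abs (m : ℝ), abs_nonneg (m : ℝ), abs_nonneg b]

lemma natAbs_cast_abs (m : ℤ) : ((m.natAbs : ℝ)) = |(m : ℝ)| := by
  rw [Nat.cast_natAbs, Int.cast_abs]

section
variable {τ z₁ z₂ : ℂ} (hτ : 0 < τ.im) (h₂ : notInt (al τ z₂))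

set_option maxHeartbeats 1000000 in
include hτ h₂ in
lemma summable_gterm : Summable (gterm τ z₁ z₂) := by
  have hδ := floor_dist_pos h₂
  set a1 := al τ z₁ with ha1
  set a2 := al τ z₂ with ha2
  set c := min (min (a2 - ⌊a2⌋) ((⌊a2⌋ : ℝ) + 1 - a2)) 1 with hc
  have hc0 : 0 < c := lt_min (lt_min hδ.1 hδ.2) one_pos
  set Cb := (a2 - ⌊a2⌋) * |a1| + ((⌊a2⌋ : ℝ) + 1 - a2) * |a1| + (1 + |a2|) ^ 2 + |a1 * a2|
    with hCb
  set r := Real.exp (-(2 * Real.pi * τ.im * c)) with hr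
  have hr0 : 0 ≤ r := (Real.exp_pos _).le
  have hr1 : r < 1 := by
    rw [hr, Real.exp_lt_one_iff]
    have : 0 < 2 * Real.pi * τ.im * c := by positivity
    linarith
  set C := Real.exp (2 * Real.pi * τ.im * Cb) with hC
  have hsum : Summable (fun p : ℤ × ℤ => (C * r ^ p.1.natAbs) * r ^ p.2.natAbs) :=
    Summable.mul_of_nonneg ((summable_r hr0 hr1).mul_left C) (summable_r hr0 hr1)
      (fun m => mul_nonneg (Real.exp_pos _).le (pow_nonneg hr0 _))
      (fun n => pow_nonneg hr0 _)
  apply Summable.of_norm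
  apply Summable.of_nonneg_of_le (fun p => norm_nonneg _) _ hsum
  rintro ⟨m, n⟩
  rw [gterm]
  by_cases h : 0 < ((n : ℝ) + a1) * ((m : ℝ) + a2)
  · rw [if_pos h, norm_mul]
    have hsgn : ‖sgn ((m : ℝ) + a2)‖ = 1 := by
      rw [sgn]; split <;> simp
    rw [hsgn, one_mul, norm_e, T_im hτ]
    have hrw : (C * r ^ m.natAbs) * r ^ n.natAbs
        = Real.exp ((2 * Real.pi * τ.im * Cb) + |(m : ℝ)| * (-(2 * Real.pi * τ.im * c))
            + |(n : ℝ)| * (-(2 * Real.pi * τ.im * c))) := by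
      rw [hC, hr, ← Real.exp_nat_mul, ← Real.exp_nat_mul, ← Real.exp_add, ← Real.exp_add,
        natAbs_cast_abs, natAbs_cast_abs]
    rw [hrw, Real.exp_le_exp]
    have hcb := cone_bound h₂ m n h
    rw [← hc, ← hCb] at hcb
    have h2p : (0 : ℝ) ≤ 2 * Real.pi * τ.im := by positivity
    have := mul_le_mul_of_nonneg_left hcb h2p
    nlinarith [this]
  · rw [if_neg h, norm_zero]
    positivity

end

section
variable {τ z₁ z₂ : ℂ} (hτ : 0 < τ.im) (h₂ : notInt (al τ z₂))

include hτ h₂ in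
lemma summable_rowF (k : ℤ) : Summable (fun m : ℤ => TT τ z₁ z₂ m k / (1 - qq τ z₂ m)) := by
  have hδp := floor_dist_pos h₂
  set a1 := al τ z₁ with ha1
  set a2 := al τ z₂ with ha2
  set δ := min (a2 - ⌊a2⌋) ((⌊a2⌋ : ℝ) + 1 - a2) with hδd
  have hδ0 : 0 < δ := lt_min hδp.1 hδp.2
  set d := min (1 - Real.exp (-(2 * Real.pi * τ.im * δ)))
    (Real.exp (2 * Real.pi * τ.im * δ) - 1) with hd
  have hx : 0 < 2 * Real.pi * τ.im * δ := by positivity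
  have hd0 : 0 < d := by
    apply lt_min
    · have : Real.exp (-(2 * Real.pi * τ.im * δ)) < 1 := by
        rw [Real.exp_lt_one_iff]; linarith
      linarith
    · have : 1 < Real.exp (2 * Real.pi * τ.im * δ) := by
        rw [Real.one_lt_exp_iff]; exact hx
      linarith
  have h2p : (0 : ℝ) ≤ 2 * Real.pi * τ.im := by positivity
  have hden : ∀ m : ℤ, d ≤ ‖1 - qq τ z₂ m‖ := by
    intro m
    have hmne : ((m : ℝ) + a2) ≠ 0 := fun hh => h₂ (-m) (by push_cast; linarith)
    rcases lt_or_gt_of_ne hmne with hm | hm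
    · have hm' : m ≤ -⌊a2⌋ - 1 := (neg_iff_notInt h₂ m).mp hm
      have h1 : δ ≤ -((m : ℝ) + a2) := by
        have h2 : (m : ℝ) ≤ -(⌊a2⌋ : ℝ) - 1 := by exact_mod_cast hm'
        have h3 : δ ≤ (⌊a2⌋ : ℝ) + 1 - a2 := min_le_right _ _
        linarith
      have h2n : Real.exp (2 * Real.pi * τ.im * δ) ≤ ‖qq τ z₂ m‖ := by
        rw [norm_q hτ, Real.exp_le_exp]
        nlinarith [mul_le_mul_of_nonneg_left h1 h2p]
      calc d ≤ Real.exp (2 * Real.pi * τ.im * δ) - 1 := min_le_right _ _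
        _ ≤ ‖qq τ z₂ m‖ - ‖(1 : ℂ)‖ := by rw [norm_one]; linarith
        _ ≤ ‖qq τ z₂ m - 1‖ := norm_sub_norm_le _ _
        _ = ‖1 - qq τ z₂ m‖ := norm_sub_rev _ _
    · have hm' : -⌊a2⌋ ≤ m := (pos_iff_notInt h₂ m).mp hm
      have h1 : δ ≤ (m : ℝ) + a2 := by
        have h2 : -(⌊a2⌋ : ℝ) ≤ (m : ℝ) := by exact_mod_cast hm'
        have h3 : δ ≤ a2 - ⌊a2⌋ := min_le_left _ _
        linarith
      have h2n : ‖qq τ z₂ m‖ ≤ Real.exp (-(2 * Real.pi * τ.im * δ)) := by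
        rw [norm_q hτ, Real.exp_le_exp]
        nlinarith [mul_le_mul_of_nonneg_left h1 h2p]
      calc d ≤ 1 - Real.exp (-(2 * Real.pi * τ.im * δ)) := min_le_left _ _
        _ ≤ ‖(1 : ℂ)‖ - ‖qq τ z₂ m‖ := by rw [norm_one]; linarith
        _ ≤ ‖(1 : ℂ) - qq τ z₂ m‖ := norm_sub_norm_le _ _
  set b := (k : ℝ) + a1 + a2 with hb
  set Q := (1 + |b|) ^ 2 + |(k : ℝ) * a2| with hQ
  set r := Real.exp (-(2 * Real.pi * τ.im)) with hr
  have hr0 : (0 : ℝ) ≤ r := (Real.exp_pos _).le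
  have hr1 : r < 1 := by
    rw [hr, Real.exp_lt_one_iff]
    have : (0 : ℝ) < 2 * Real.pi * τ.im := by positivity
    linarith
  apply Summable.of_norm
  apply Summable.of_nonneg_of_le (fun m => norm_nonneg _) _
    ((summable_r hr0 hr1).mul_left (Real.exp (2 * Real.pi * τ.im * Q) / d))
  intro m
  have hEk : (((k : ℝ) + m / 2) * m + m * a1 + ((m : ℝ) + k) * a2)
      = (m : ℝ) ^ 2 / 2 + m * b + k * a2 := by rw [hb]; ring
  have hE : |(m : ℝ)| - Q ≤ ((k : ℝ) + m / 2) * m + m * a1 + ((m : ℝ) + k) * a2 := by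
    rw [hEk, hQ]
    have := quad_bound b m
    have := neg_abs_le ((k : ℝ) * a2)
    linarith
  have hnum : ‖TT τ z₁ z₂ m k‖ ≤ Real.exp (2 * Real.pi * τ.im * Q) * r ^ m.natAbs := by
    rw [norm_T hτ, hr, ← Real.exp_nat_mul, ← Real.exp_add, natAbs_cast_abs, Real.exp_le_exp]
    nlinarith [mul_le_mul_of_nonneg_left hE h2p]
  rw [norm_div]
  have s1 : ‖TT τ z₁ z₂ m k‖ / ‖1 - qq τ z₂ m‖ ≤ ‖TT τ z₁ z₂ m k‖ / d :=
    div_le_div_of_nonneg_left (norm_nonneg _) hd0 (hden m)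
  have s2 : ‖TT τ z₁ z₂ m k‖ / d ≤ (Real.exp (2 * Real.pi * τ.im * Q) * r ^ m.natAbs) / d :=
    div_le_div_of_nonneg_right hnum hd0.le
  calc ‖TT τ z₁ z₂ m k‖ / ‖1 - qq τ z₂ m‖ ≤ _ := s1
    _ ≤ (Real.exp (2 * Real.pi * τ.im * Q) * r ^ m.natAbs) / d := s2
    _ = Real.exp (2 * Real.pi * τ.im * Q) / d * r ^ m.natAbs := by ring

end


section
variable {τ z₁ z₂ : ℂ} (hτ : 0 < τ.im)

omit hτ in
lemma tele (m : ℤ) (j : ℕ) :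
    (1 - qq τ z₂ m) * (∑ i ∈ Finset.range j, TT τ z₁ z₂ m (-(i : ℤ) - 1))
      = TT τ z₁ z₂ m (-(j : ℤ)) - TT τ z₁ z₂ m 0 := by
  induction j with
  | zero => simp
  | succ j ih =>
    rw [Finset.sum_range_succ, mul_add, ih]
    have hstep : TT τ z₁ z₂ m (-(j : ℤ) - 1) * qq τ z₂ m = TT τ z₁ z₂ m (-(j : ℤ)) := by
      rw [← T_succ]
      norm_num
    have hidx : (-((j + 1 : ℕ) : ℤ)) = -(j : ℤ) - 1 := by push_cast; ring
    rw [hidx]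
    linear_combination -hstep

include hτ in
lemma theta_row (n : ℤ) :
    HasSum (fun m : ℤ => TT τ z₁ z₂ m (-n))
      (e (-((n : ℂ) ^ 2 * τ / 2) + n * z₁) * theta (z₁ + z₂) τ) := by
  have hth : Summable fun k : ℤ => jacobiTheta₂_term k (z₁ + z₂) τ :=
    (summable_jacobiTheta₂_term_iff (z₁ + z₂) τ).mpr hτ
  have hth' : Summable fun k : ℤ => e (τ * k ^ 2 / 2 + k * (z₁ + z₂)) := by
    apply hth.congr
    intro k
    rw [jacobiTheta₂_term, e]
    congr 1
    ring
  have h1 : HasSum (fun k : ℤ => e (-((n : ℂ) ^ 2 * τ / 2) + n * z₁)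
      * e (τ * k ^ 2 / 2 + k * (z₁ + z₂)))
      (e (-((n : ℂ) ^ 2 * τ / 2) + n * z₁) * theta (z₁ + z₂) τ) :=
    hth'.hasSum.mul_left _
  have key : ∀ k : ℤ, TT τ z₁ z₂ (k + n) (-n)
      = e (-((n : ℂ) ^ 2 * τ / 2) + n * z₁) * e (τ * k ^ 2 / 2 + k * (z₁ + z₂)) := by
    intro k
    rw [TT, ← e_add]
    congr 1
    push_cast
    ring
  simp only [← key] at h1
  exact ((Equiv.addRight n).hasSum_iff).mp h1

end



lemma one_sub_q_ne {τ z₂ : ℂ} (hτ : 0 < τ.im) (h₂ : notInt (al τ z₂)) (m : ℤ) :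
    (1 : ℂ) - qq τ z₂ m ≠ 0 := by
  intro h
  have hq : ‖qq τ z₂ m‖ = 1 := by
    rw [show qq τ z₂ m = 1 by linear_combination -h, norm_one]
  rw [norm_q hτ] at hq
  have h3 : -(2 * Real.pi * (((m : ℝ) + al τ z₂) * τ.im)) = 0 := by
    rwa [← Real.exp_zero, Real.exp_eq_exp] at hq
  have hmne : ((m : ℝ) + al τ z₂) ≠ 0 := fun hh => h₂ (-m) (by push_cast; linarith)
  have hπ := Real.pi_pos
  rcases lt_or_gt_of_ne hmne with hm | hm
  · have hX : ((m : ℝ) + al τ z₂) * τ.im < 0 := mul_neg_of_neg_of_pos hm hτ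
    nlinarith [h3, hX, hπ]
  · have hX : 0 < ((m : ℝ) + al τ z₂) * τ.im := mul_pos hm hτ
    nlinarith [h3, hX, hπ]


theorem stmt19 (τ : ℂ) (hτ : 0 < τ.im) (z₁ z₂ : ℂ)
    (h₁ : 0 ≤ al τ z₁) (h₁' : notInt (al τ z₁)) (h₂ : notInt (al τ z₂)) :
    g0 z₁ z₂ τ - gF z₁ z₂ τ =
      -(∑ n ∈ Finset.Icc (1 : ℤ) ⌊al τ z₁⌋, e (-((n : ℂ) ^ 2 * τ / 2) + n * z₁)) *
        theta (z₁ + z₂) τ := by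
  set K := ⌊al τ z₁⌋ with hKd
  have hK0 : 0 ≤ K := Int.floor_nonneg.mpr h₁
  have hgF : HasSum (fun m : ℤ => TT τ z₁ z₂ m (-K) / (1 - qq τ z₂ m)) (gF z₁ z₂ τ) :=
    HasSum.prod_fiberwise (summable_gterm hτ h₂).hasSum (fun m => row hτ h₁' h₂ m)
  have hgFeq : gF z₁ z₂ τ = ∑' m : ℤ, TT τ z₁ z₂ m (-K) / (1 - qq τ z₂ m) := hgF.tsum_eq.symm
  have hg0eq : g0 z₁ z₂ τ = ∑' m : ℤ, TT τ z₁ z₂ m 0 / (1 - qq τ z₂ m) := by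
    rw [g0]
    apply tsum_congr
    intro m
    have ha : TT τ z₁ z₂ m 0 = e (τ * m ^ 2 / 2 + m * (z₁ + z₂)) := by
      rw [TT]; congr 1; push_cast; ring
    have hb : qq τ z₂ m = e ((m : ℂ) * τ + z₂) := rfl
    rw [ha, hb]
  have hS0 : Summable fun m : ℤ => TT τ z₁ z₂ m 0 / (1 - qq τ z₂ m) := summable_rowF hτ h₂ 0
  rw [hg0eq, hgFeq, ← Summable.tsum_sub hS0 hgF.summable]
  have htele : ∀ m : ℤ, TT τ z₁ z₂ m 0 / (1 - qq τ z₂ m) - TT τ z₁ z₂ m (-K) / (1 - qq τ z₂ m)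
      = -∑ n ∈ Finset.Icc (1 : ℤ) K, TT τ z₁ z₂ m (-n) := by
    intro m
    have h0 := tele (τ := τ) (z₁ := z₁) (z₂ := z₂) m K.toNat
    rw [Int.toNat_of_nonneg hK0] at h0
    have hmap : (Finset.range K.toNat).map ⟨fun i : ℕ => (i : ℤ) + 1,
        fun a b h => by simpa using h⟩ = Finset.Icc (1 : ℤ) K := by
      ext x
      simp only [Finset.mem_map, Finset.mem_range, Finset.mem_Icc, Function.Embedding.coeFn_mk]
      constructor
      · rintro ⟨a, ha, rfl⟩
        show 1 ≤ (a : ℤ) + 1 ∧ (a : ℤ) + 1 ≤ K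
        omega
      · rintro ⟨hx1, hx2⟩
        exact ⟨(x - 1).toNat, by omega, by show ((x - 1).toNat : ℤ) + 1 = x; omega⟩
    have hre : ∑ n ∈ Finset.Icc (1 : ℤ) K, TT τ z₁ z₂ m (-n)
        = ∑ i ∈ Finset.range K.toNat, TT τ z₁ z₂ m (-(i : ℤ) - 1) := by
      rw [← hmap, Finset.sum_map]
      apply Finset.sum_congr rfl
      intro i _
      congr 1
      show -((i : ℤ) + 1) = -(i : ℤ) - 1
      ring
    rw [hre, div_sub_div_same, div_eq_iff (one_sub_q_ne hτ h₂ m)]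
    linear_combination h0
  rw [tsum_congr htele, tsum_neg]
  have hswap : ∑' m : ℤ, ∑ n ∈ Finset.Icc (1 : ℤ) K, TT τ z₁ z₂ m (-n)
      = ∑ n ∈ Finset.Icc (1 : ℤ) K, ∑' m : ℤ, TT τ z₁ z₂ m (-n) :=
    Summable.tsum_finsetSum (fun n _ => (theta_row hτ n).summable)
  rw [hswap]
  have hval : ∀ n ∈ Finset.Icc (1 : ℤ) K, (∑' m : ℤ, TT τ z₁ z₂ m (-n))
      = e (-((n : ℂ) ^ 2 * τ / 2) + n * z₁) * theta (z₁ + z₂) τ :=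
    fun n _ => (theta_row hτ n).tsum_eq
  rw [Finset.sum_congr rfl hval, ← Finset.sum_mul, neg_mul]
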